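/- arXiv:2111.00606 — 4 statements merged into one kernel-verified Lean document; each statement's English description precedes it below -/
import Mathlib

section
/- Let V be a real inner product space and let T₀ < T₁ < ⋯ < T_P partition a time domain. For each p, suppose numbers (in ℝ) are defined by the accumulation relations (φ^p, e^p)(T_p) = (φ^p, e^p)(T_{p-1}) + R^p, where e^p(T_{p-1}) = u(T_{p-1}) - Û^p(T_{p-1}) (i.e., the fine-scale solution U^p takes its initial condition from the coarse solution Û^p at T_{p-1}), φ^p(T_p) = φ̂(T_p) for a global adjoint φ̂ with φ̂(T_P) = ψ, and e^p = u - U^p. Then (ψ, u(T_P) - U^P(T_P)) = Σ_{p=1}^{P} R^p + (φ^1, u - Û^1)(T₀) + Σ_{p=2}^{P} [ (φ^p - φ̂, u - Û^{p-1})(T_{p-1}) + (φ^p - φ̂, Û^{p-1} - Û^p)(T_{p-1}) + (φ̂, U^{p-1} - U^p)(T_{p-1}) ]. -/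
open scoped RealInnerProductSpace

/-- Parareal error representation (eq. `par_err_rep_without_aux_errs`) as an algebraic
telescoping identity. `u j`, `Uf p j`, `Uc p j`, `φf p j`, `φc j` denote the values at the
synchronization time `T j` of the exact solution, the fine and coarse solutions on temporal
subdomain `p`, the fine adjoint on subdomain `p` and the coarse adjoint, respectively. -/
theorem parareal_error_representation
    {V : Type*} [NormedAddCommGroup V] [InnerProductSpace ℝ V]
    (P : ℕ) (hP : 1 ≤ P) (T : ℕ → ℝ) (hT : ∀ p < P, T p < T (p + 1))
    (u : ℕ → V) (Uf Uc : ℕ → ℕ → V) (φf : ℕ → ℕ → V) (φc : ℕ → V)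
    (R : ℕ → ℝ) (ψ : V)
    -- per-subdomain accumulation relation `(φ^p, e^p)(T_p) = (φ^p, e^p)(T_{p-1}) + R^p`
    (hacc : ∀ p ∈ Finset.Icc 1 P,
      ⟪φf p p, u p - Uf p p⟫ = ⟪φf p (p - 1), u (p - 1) - Uf p (p - 1)⟫ + R p)
    -- the fine solution takes its initial condition from the coarse solution
    (hinit : ∀ p ∈ Finset.Icc 1 P, Uf p (p - 1) = Uc p (p - 1))
    -- the fine adjoint on subdomain `p` has terminal data `φ̂(T_p)`
    (hterm : ∀ p ∈ Finset.Icc 1 P, φf p p = φc p)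
    -- the coarse adjoint has terminal data `ψ`
    (hψ : φc P = ψ) :
    ⟪ψ, u P - Uf P P⟫ =
      (∑ p ∈ Finset.Icc 1 P, R p) + ⟪φf 1 0, u 0 - Uc 1 0⟫ +
        ∑ p ∈ Finset.Icc 2 P,
          (⟪φf p (p - 1) - φc (p - 1), u (p - 1) - Uc (p - 1) (p - 1)⟫
            + ⟪φf p (p - 1) - φc (p - 1), Uc (p - 1) (p - 1) - Uc p (p - 1)⟫
            + ⟪φc (p - 1), Uf (p - 1) (p - 1) - Uf p (p - 1)⟫) := by
  have key : ∀ n, 1 ≤ n → n ≤ P →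
      ⟪φc n, u n - Uf n n⟫ =
        (∑ p ∈ Finset.Icc 1 n, R p) + ⟪φf 1 0, u 0 - Uc 1 0⟫ +
          ∑ p ∈ Finset.Icc 2 n,
            (⟪φf p (p - 1) - φc (p - 1), u (p - 1) - Uc (p - 1) (p - 1)⟫
              + ⟪φf p (p - 1) - φc (p - 1), Uc (p - 1) (p - 1) - Uc p (p - 1)⟫
              + ⟪φc (p - 1), Uf (p - 1) (p - 1) - Uf p (p - 1)⟫) := by
    intro n h1
    induction n, h1 using Nat.le_induction with
    | base =>
      intro h1P
      have m1 : (1 : ℕ) ∈ Finset.Icc 1 P := by simp [hP]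
      have := hacc 1 m1
      rw [hterm 1 m1, hinit 1 m1] at this
      simpa using by linarith [this]
    | succ n hn ih =>
      intro hsucc
      have hnP : n ≤ P := le_trans (Nat.le_succ n) hsucc
      have msucc : n + 1 ∈ Finset.Icc 1 P := by
        simp [hsucc, Nat.le_add_left]
      have ihn := ih hnP
      have hA := hacc (n + 1) msucc
      rw [hterm (n + 1) msucc, hinit (n + 1) msucc, Nat.add_sub_cancel] at hA
      have hUf : Uf (n + 1) n = Uc (n + 1) n := by
        simpa using hinit (n + 1) msucc
      have expand : ⟪φf (n + 1) n, u n - Uc (n + 1) n⟫ =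
          ⟪φc n, u n - Uf n n⟫ +
            (⟪φf (n + 1) n - φc n, u n - Uc n n⟫
              + ⟪φf (n + 1) n - φc n, Uc n n - Uc (n + 1) n⟫
              + ⟪φc n, Uf n n - Uf (n + 1) n⟫) := by
        rw [hUf]
        simp only [inner_sub_left, inner_sub_right]
        ring
      rw [hA, Finset.sum_Icc_succ_top (by omega : 1 ≤ n + 1),
        Finset.sum_Icc_succ_top (by omega : 2 ≤ n + 1)]
      simp only [Nat.add_sub_cancel]
      linarith [ihn, expand]
  rw [← hψ]
  exact key P hP le_rfl
end

section
/- Under the hypotheses of the Parareal error representation and the auxiliary adjoint identity, the quantity-of-interest error after k_t Parareal iterations decomposes as (ψ, u(T) - U^{(k_t)}(T)) = 𝒟 + 𝒜 + 𝒞 + 𝒦, where 𝒟 = Σ_{p=1}^{P} R^p(U^{p,(k_t)}, φ^p) + (φ^1, u - Û^{1,(k_t)})(T₀); 𝒜 = Σ_{p=2}^{P} [ Σ_{k=2}^{p-1} (Φ^p, Û^{k-1,(k_t)} - Û^{k,(k_t)})(T_{k-1}) + Σ_{k=1}^{p-1} R̂^k(Û^{k,(k_t)}, Φ^p) + (Φ^p,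 u - Û^{1,(k_t)})(T₀) ]; 𝒞 = Σ_{p=2}^{P} (φ^p - φ̂, Û^{p-1,(k_t)} - Û^{p,(k_t)})(T_{p-1}); 𝒦 = Σ_{p=2}^{P} (φ̂, U^{p-1,(k_t)} - U^{p,(k_t)})(T_{p-1}). -/
open scoped RealInnerProductSpace

lemma inner_split_mid {V : Type*} [NormedAddCommGroup V] [InnerProductSpace ℝ V]
    (x a b c : V) : ⟪x, a - b⟫ = ⟪x, a - c⟫ + ⟪x, c - b⟫ := by
  simp only [inner_sub_right]; ring

/-- Theorem `par_err`: a posteriori error decomposition for the Time Parallel (Parareal)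
Algorithm at a fixed Parareal iteration, `(ψ, e(T)) = 𝒟 + 𝒜 + 𝒞 + 𝒦`.
`u j`, `Uf p j`, `Uc p j`, `φf p j`, `φc j`, `Φaux p j` denote values at time `T j` of the
exact solution, fine/coarse solutions on temporal subdomain `p`, fine/coarse adjoints, and
the auxiliary adjoint associated with subdomain `p`. `Rf p` is the fine adjoint-weighted
residual on subdomain `p` and `Rc p k` the coarse residual weighted by `Φaux p`. -/
theorem TPA_error_decomposition
    {V : Type*} [NormedAddCommGroup V] [InnerProductSpace ℝ V]
    (P : ℕ) (hP : 1 ≤ P) (T : ℕ → ℝ) (hT : ∀ p < P, T p < T (p + 1))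
    (u : ℕ → V) (Uf Uc : ℕ → ℕ → V) (φf : ℕ → ℕ → V) (φc : ℕ → V)
    (Φaux : ℕ → ℕ → V) (Rf : ℕ → ℝ) (Rc : ℕ → ℕ → ℝ) (ψ : V)
    -- fine-scale accumulation relations
    (haccf : ∀ p ∈ Finset.Icc 1 P,
      ⟪φf p p, u p - Uf p p⟫ = ⟪φf p (p - 1), u (p - 1) - Uf p (p - 1)⟫ + Rf p)
    -- fine solutions take initial data from the coarse solutions
    (hinit : ∀ p ∈ Finset.Icc 1 P, Uf p (p - 1) = Uc p (p - 1))
    -- fine adjoint terminal data from the coarse adjoint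
    (hterm : ∀ p ∈ Finset.Icc 1 P, φf p p = φc p)
    -- coarse adjoint terminal data
    (hψ : φc P = ψ)
    -- coarse-scale accumulation relations weighted by the auxiliary adjoints
    (haccc : ∀ p ∈ Finset.Icc 2 P, ∀ k ∈ Finset.Icc 1 (p - 1),
      ⟪Φaux p k, u k - Uc k k⟫ = ⟪Φaux p (k - 1), u (k - 1) - Uc k (k - 1)⟫ + Rc p k)
    -- auxiliary adjoint terminal data
    (hauxterm : ∀ p ∈ Finset.Icc 2 P, Φaux p (p - 1) = φf p (p - 1) - φc (p - 1)) :
    ⟪ψ, u P - Uf P P⟫ =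
      -- 𝒟 : fine discretization error
      ((∑ p ∈ Finset.Icc 1 P, Rf p) + ⟪φf 1 0, u 0 - Uc 1 0⟫)
      -- 𝒜 : auxiliary error
      + (∑ p ∈ Finset.Icc 2 P,
          ((∑ k ∈ Finset.Icc 2 (p - 1), ⟪Φaux p (k - 1), Uc (k - 1) (k - 1) - Uc k (k - 1)⟫)
            + (∑ k ∈ Finset.Icc 1 (p - 1), Rc p k)
            + ⟪Φaux p 0, u 0 - Uc 1 0⟫))
      -- 𝒞 : coarse-scale jump error
      + (∑ p ∈ Finset.Icc 2 P,
          ⟪φf p (p - 1) - φc (p - 1), Uc (p - 1) (p - 1) - Uc p (p - 1)⟫)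
      -- 𝒦 : Parareal iteration error
      + (∑ p ∈ Finset.Icc 2 P, ⟪φc (p - 1), Uf (p - 1) (p - 1) - Uf p (p - 1)⟫) := by
  -- auxiliary telescoping of the coarse accumulation relation
  have aux : ∀ p, 2 ≤ p → p ≤ P → ∀ m, 1 ≤ m → m ≤ p - 1 →
      ⟪Φaux p m, u m - Uc m m⟫ =
        (∑ k ∈ Finset.Icc 2 m, ⟪Φaux p (k - 1), Uc (k - 1) (k - 1) - Uc k (k - 1)⟫)
          + (∑ k ∈ Finset.Icc 1 m, Rc p k) + ⟪Φaux p 0, u 0 - Uc 1 0⟫ := by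
    intro p hp2 hpP m
    induction m with
    | zero => omega
    | succ m ih =>
      intro _ hm
      rcases Nat.eq_zero_or_pos m with hm0 | hm1
      · subst hm0
        have h := haccc p (Finset.mem_Icc.mpr ⟨hp2, hpP⟩) 1
          (Finset.mem_Icc.mpr ⟨le_refl 1, by omega⟩)
        simp only [Nat.sub_self] at h
        rw [h]
        rw [show Finset.Icc 2 1 = ∅ from rfl, Finset.sum_empty,
          show Finset.Icc 1 1 = {1} from rfl, Finset.sum_singleton]
        ring
      · have h := haccc p (Finset.mem_Icc.mpr ⟨hp2, hpP⟩) (m + 1)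
          (Finset.mem_Icc.mpr ⟨by omega, hm⟩)
        simp only [Nat.add_sub_cancel] at h
        rw [h, inner_split_mid (Φaux p m) (u m) (Uc (m + 1) m) (Uc m m),
          ih (by omega) (by omega),
          Finset.sum_Icc_succ_top (by omega : 1 ≤ m + 1),
          Finset.sum_Icc_succ_top (by omega : 2 ≤ m + 1)]
        simp only [Nat.add_sub_cancel]
        ring
  -- main telescoping of the fine accumulation relation
  have main : ∀ n, 1 ≤ n → n ≤ P →
      ⟪φc n, u n - Uf n n⟫ =
        ((∑ p ∈ Finset.Icc 1 n, Rf p) + ⟪φf 1 0, u 0 - Uc 1 0⟫)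
        + (∑ p ∈ Finset.Icc 2 n,
            ((∑ k ∈ Finset.Icc 2 (p - 1), ⟪Φaux p (k - 1), Uc (k - 1) (k - 1) - Uc k (k - 1)⟫)
              + (∑ k ∈ Finset.Icc 1 (p - 1), Rc p k)
              + ⟪Φaux p 0, u 0 - Uc 1 0⟫))
        + (∑ p ∈ Finset.Icc 2 n,
            ⟪φf p (p - 1) - φc (p - 1), Uc (p - 1) (p - 1) - Uc p (p - 1)⟫)
        + (∑ p ∈ Finset.Icc 2 n, ⟪φc (p - 1), Uf (p - 1) (p - 1) - Uf p (p - 1)⟫) := by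
    intro n
    induction n with
    | zero => omega
    | succ n ih =>
      intro _ hn
      rcases Nat.eq_zero_or_pos n with hn0 | hn1
      · subst hn0
        have h1 := haccf 1 (Finset.mem_Icc.mpr ⟨le_refl 1, hP⟩)
        have h2 := hinit 1 (Finset.mem_Icc.mpr ⟨le_refl 1, hP⟩)
        have h3 := hterm 1 (Finset.mem_Icc.mpr ⟨le_refl 1, hP⟩)
        simp only [Nat.sub_self] at h1 h2 h3
        rw [← h3, h1, h2]
        rw [show Finset.Icc 2 1 = ∅ from rfl, show Finset.Icc 1 1 = {1} from rfl]
        simp only [Finset.sum_empty, Finset.sum_singleton]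
        ring
      · have hmem : n + 1 ∈ Finset.Icc 1 P := Finset.mem_Icc.mpr ⟨by omega, hn⟩
        have h1 := haccf (n + 1) hmem
        have h2 := hinit (n + 1) hmem
        have h3 := hterm (n + 1) hmem
        have h4 := hauxterm (n + 1) (Finset.mem_Icc.mpr ⟨by omega, hn⟩)
        simp only [Nat.add_sub_cancel] at h1 h2 h3 h4
        have ihn := ih (by omega) (by omega)
        have hauxval := aux (n + 1) (by omega) hn n hn1 (by omega)
        -- split the interface term
        have split : ⟪φf (n + 1) n, u n - Uf (n + 1) n⟫ =
            ⟪Φaux (n + 1) n, u n - Uc n n⟫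
            + ⟪φf (n + 1) n - φc n, Uc n n - Uc (n + 1) n⟫
            + ⟪φc n, u n - Uf n n⟫
            + ⟪φc n, Uf n n - Uf (n + 1) n⟫ := by
          rw [h4]
          have e1 : (φf (n + 1) n : V) = (φf (n + 1) n - φc n) + φc n := by abel
          calc ⟪φf (n + 1) n, u n - Uf (n + 1) n⟫
              = ⟪φf (n + 1) n - φc n, u n - Uf (n + 1) n⟫
                + ⟪φc n, u n - Uf (n + 1) n⟫ := by
                rw [← inner_add_left, ← e1]
            _ = _ := by
                rw [show Uf (n + 1) n = Uc (n + 1) n from h2,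
                  inner_split_mid (φf (n + 1) n - φc n) (u n) (Uc (n + 1) n) (Uc n n),
                  inner_split_mid (φc n) (u n) (Uc (n + 1) n) (Uf n n),
                  show Uc (n + 1) n = Uf (n + 1) n from h2.symm]
                ring
        rw [← h3, h1, split, hauxval, ihn,
          Finset.sum_Icc_succ_top (by omega : 1 ≤ n + 1),
          Finset.sum_Icc_succ_top (by omega : 2 ≤ n + 1),
          Finset.sum_Icc_succ_top (by omega : 2 ≤ n + 1),
          Finset.sum_Icc_succ_top (by omega : 2 ≤ n + 1)]
        simp only [Nat.add_sub_cancel]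
        ring
  rw [← hψ]
  exact main P hP le_rfl
end

section
/- Let T₀ < T₁ < ⋯ < T_P, and suppose for each subdomain p the coarse-scale relation (φ̂, ê^{p,(k)})(T_p) = (φ̂, ê^{p,(k)})(T_{p-1}) + R̂^p(Û^{p,(k)}, φ̂) holds, where ê^{p,(k)} = u - Û^{p,(k)}, and the coarse Parareal initial conditions satisfy Û^{p,(k)}(T_{p-1}) = Û^{p-1,(k)}(T_{p-1}) + C_{p-1}^{k-1} for p ≥ 2, with C_p^{k-1} ∈ V the Parareal corrections. If φ̂(T_P) = ψ, then (ψ, u(T_P) - Û^{P,(k)}(T_P)) = Σ_{p=1}^{P} R̂^p(Û^{p,(k)}, φ̂) - Σ_{p=1}^{P-1} (φ̂(T_p), C_p^{k-1}) + (φ̂(0), u(0) - Û^{1,(k)}(0)). -/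
open scoped RealInnerProductSpace

lemma parareal_aux
    {V : Type*} [NormedAddCommGroup V] [InnerProductSpace ℝ V]
    (u : ℕ → V) (Uc : ℕ → ℕ → V) (φc : ℕ → V) (C : ℕ → V) (Rc : ℕ → ℝ) :
    ∀ P, 1 ≤ P →
    (∀ p, 1 ≤ p → p ≤ P →
      ⟪φc p, u p - Uc p p⟫ = ⟪φc (p - 1), u (p - 1) - Uc p (p - 1)⟫ + Rc p) →
    (∀ p, 2 ≤ p → p ≤ P → Uc p (p - 1) = Uc (p - 1) (p - 1) + C (p - 1)) →
    ⟪φc P, u P - Uc P P⟫ =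
      (∑ p ∈ Finset.Icc 1 P, Rc p)
        - (∑ p ∈ Finset.Icc 1 (P - 1), ⟪φc p, C p⟫)
        + ⟪φc 0, u 0 - Uc 1 0⟫ := by
  intro P
  induction P with
  | zero => omega
  | succ n ih =>
    intro _ hacc hinit
    rcases Nat.eq_or_lt_of_le (Nat.one_le_iff_ne_zero.mpr (Nat.succ_ne_zero n)) with h1 | h1
    · have h0 : n = 0 := by omega
      subst h0
      simpa [add_comm] using hacc 1 le_rfl le_rfl
    · have hn : 1 ≤ n := by omega
      have key := hacc (n + 1) (by omega) le_rfl
      have hi := hinit (n + 1) (by omega) le_rfl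
      simp only [Nat.add_sub_cancel] at key hi
      rw [key, hi]
      have : u n - (Uc n n + C n) = (u n - Uc n n) - C n := by abel
      rw [this, inner_sub_right,
        ih hn (fun p h1 h2 => hacc p h1 (by omega)) (fun p h1 h2 => hinit p h1 (by omega))]
      rw [Finset.sum_Icc_succ_top (by omega : 1 ≤ n + 1) Rc]
      have hn' : n - 1 + 1 = n := by omega
      have hsplit : (∑ p ∈ Finset.Icc 1 n, ⟪φc p, C p⟫)
          = (∑ p ∈ Finset.Icc 1 (n - 1), ⟪φc p, C p⟫) + ⟪φc n, C n⟫ := by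
        conv_lhs => rw [← hn']
        rw [Finset.sum_Icc_succ_top (by omega : 1 ≤ n - 1 + 1), hn']
      simp only [Nat.add_sub_cancel, hsplit]
      ring

/-- Coarse-scale error representation for the Parareal algorithm (eq. `coarse_err`):
`(ψ, u(T) - Û^P(T)) = Σ_p R̂^p - Σ_p (φ̂(T_p), C_p^{k-1}) + (φ̂(0), u(0) - Û^1(0))`.
`u j`, `Uc p j`, `φc j` are values at time `T j`; `C p` is the Parareal correction
`C_p^{k-1}` added to the coarse initial condition at `T_p`. -/
theorem parareal_coarse_error_representation
    {V : Type*} [NormedAddCommGroup V] [InnerProductSpace ℝ V]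
    (P : ℕ) (hP : 1 ≤ P) (T : ℕ → ℝ) (hT : ∀ p < P, T p < T (p + 1))
    (u : ℕ → V) (Uc : ℕ → ℕ → V) (φc : ℕ → V) (C : ℕ → V) (Rc : ℕ → ℝ) (ψ : V)
    -- coarse-scale accumulation relations
    (hacc : ∀ p ∈ Finset.Icc 1 P,
      ⟪φc p, u p - Uc p p⟫ = ⟪φc (p - 1), u (p - 1) - Uc p (p - 1)⟫ + Rc p)
    -- Parareal coarse initial conditions with corrections
    (hinit : ∀ p ∈ Finset.Icc 2 P, Uc p (p - 1) = Uc (p - 1) (p - 1) + C (p - 1))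
    -- coarse adjoint terminal data
    (hψ : φc P = ψ) :
    ⟪ψ, u P - Uc P P⟫ =
      (∑ p ∈ Finset.Icc 1 P, Rc p)
        - (∑ p ∈ Finset.Icc 1 (P - 1), ⟪φc p, C p⟫)
        + ⟪φc 0, u 0 - Uc 1 0⟫ := by
  rw [← hψ]
  exact parareal_aux u Uc φc C Rc P hP
    (fun p h1 h2 => hacc p (Finset.mem_Icc.mpr ⟨h1, h2⟩))
    (fun p h1 h2 => hinit p (Finset.mem_Icc.mpr ⟨h1, h2⟩))
end

section
/- Assume the hypotheses of the Parareal error decomposition theorem and additionally that on each fine time step the residual splits as R^p(W^{(k_t, K_s)}, φ^p) = ℰ_t^p + ℰ_s^p + ℰ_k^p. Then the total quantity-of-interest error of the Space-Time Parallel Algorithm satisfies (ψ, u(T) - W^{(k_t, K_s)}(T)) = 𝒟_t + 𝒟_s + 𝒟_k + 𝒜 + 𝒞 + 𝒦, where 𝒟_t = Σ_{p=1}^{P} ℰ_t^p + (φ^1, u - Û^{1,(k_t)})(0), 𝒟_s = Σ_{p=1}^{P} ℰ_s^p, 𝒟_k = Σ_{p=1}^{P} ℰ_k^p, and 𝒜,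 𝒞, 𝒦 are the auxiliary, coarse-jump, and Parareal iteration error contributions from the time-parallel analysis. -/
open scoped RealInnerProductSpace

private lemma tele_aux {V : Type*} [NormedAddCommGroup V] [InnerProductSpace ℝ V]
    (u : ℕ → V) (Uc : ℕ → ℕ → V) (Φ : ℕ → V) (R : ℕ → ℝ) :
    ∀ n, 1 ≤ n →
    (∀ k ∈ Finset.Icc 1 n, ⟪Φ k, u k - Uc k k⟫ = ⟪Φ (k - 1), u (k - 1) - Uc k (k - 1)⟫ + R k) →
    ⟪Φ n, u n - Uc n n⟫ =
      (∑ k ∈ Finset.Icc 2 n, ⟪Φ (k - 1), Uc (k - 1) (k - 1) - Uc k (k - 1)⟫)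
      + (∑ k ∈ Finset.Icc 1 n, R k) + ⟪Φ 0, u 0 - Uc 1 0⟫ := by
  intro n hn
  induction n, hn using Nat.le_induction with
  | base =>
    intro h
    have := h 1 (by simp)
    simp only [Finset.Icc_self, Finset.sum_singleton] at *
    rw [show Finset.Icc 2 1 = ∅ by rfl]
    rw [this]; ring
  | succ n hn ih =>
    intro h
    have key := h (n + 1) (by simp)
    simp only [Nat.add_sub_cancel] at key
    have hsplitv : u n - Uc (n + 1) n = (u n - Uc n n) + (Uc n n - Uc (n + 1) n) := by abel
    rw [hsplitv, inner_add_right] at key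
    have ihv := ih (fun k hk => h k (Finset.mem_Icc.mpr
      ⟨(Finset.mem_Icc.mp hk).1, (Finset.mem_Icc.mp hk).2.trans (Nat.le_succ n)⟩))
    rw [ihv] at key
    rw [Finset.sum_Icc_succ_top (by omega : 2 ≤ n + 1),
        Finset.sum_Icc_succ_top (by omega : 1 ≤ n + 1)]
    simp only [Nat.add_sub_cancel]
    rw [key]; ring

private lemma main_aux {V : Type*} [NormedAddCommGroup V] [InnerProductSpace ℝ V]
    (P : ℕ)
    (u : ℕ → V) (Uf Uc : ℕ → ℕ → V) (φf : ℕ → ℕ → V) (φc : ℕ → V)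
    (Φaux : ℕ → ℕ → V) (Rf : ℕ → ℝ) (Rc : ℕ → ℕ → ℝ)
    (haccf : ∀ p ∈ Finset.Icc 1 P,
      ⟪φf p p, u p - Uf p p⟫ = ⟪φf p (p - 1), u (p - 1) - Uf p (p - 1)⟫ + Rf p)
    (hinit : ∀ p ∈ Finset.Icc 1 P, Uf p (p - 1) = Uc p (p - 1))
    (hterm : ∀ p ∈ Finset.Icc 1 P, φf p p = φc p)
    (haccc : ∀ p ∈ Finset.Icc 2 P, ∀ k ∈ Finset.Icc 1 (p - 1),
      ⟪Φaux p k, u k - Uc k k⟫ = ⟪Φaux p (k - 1), u (k - 1) - Uc k (k - 1)⟫ + Rc p k)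
    (hauxterm : ∀ p ∈ Finset.Icc 2 P, Φaux p (p - 1) = φf p (p - 1) - φc (p - 1)) :
    ∀ p, 1 ≤ p → p ≤ P →
    ⟪φc p, u p - Uf p p⟫ =
      (∑ q ∈ Finset.Icc 1 p, Rf q) + ⟪φf 1 0, u 0 - Uc 1 0⟫
      + (∑ q ∈ Finset.Icc 2 p,
          ((∑ k ∈ Finset.Icc 2 (q - 1), ⟪Φaux q (k - 1), Uc (k - 1) (k - 1) - Uc k (k - 1)⟫)
            + (∑ k ∈ Finset.Icc 1 (q - 1), Rc q k)
            + ⟪Φaux q 0, u 0 - Uc 1 0⟫))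
      + (∑ q ∈ Finset.Icc 2 p,
          ⟪φf q (q - 1) - φc (q - 1), Uc (q - 1) (q - 1) - Uc q (q - 1)⟫)
      + (∑ q ∈ Finset.Icc 2 p, ⟪φc (q - 1), Uf (q - 1) (q - 1) - Uf q (q - 1)⟫) := by
  intro p hp
  induction p, hp using Nat.le_induction with
  | base =>
    intro hP
    have h1 := haccf 1 (by simp [hP])
    have h2 := hinit 1 (by simp [hP])
    have h3 := hterm 1 (by simp [hP])
    rw [show Finset.Icc 2 1 = ∅ by rfl]
    simp only [Finset.Icc_self, Finset.sum_singleton, Finset.sum_empty] at *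
    rw [← h3, h1, h2]; ring
  | succ p hp ih =>
    intro hP
    have hpP : p ≤ P := by omega
    have hmem1 : p + 1 ∈ Finset.Icc 1 P := Finset.mem_Icc.mpr ⟨by omega, hP⟩
    have hmem2 : p + 1 ∈ Finset.Icc 2 P := Finset.mem_Icc.mpr ⟨by omega, hP⟩
    have h1 := haccf (p + 1) hmem1
    have h2 := hinit (p + 1) hmem1
    have h3 := hterm (p + 1) hmem1
    have h4 := hauxterm (p + 1) hmem2
    simp only [Nat.add_sub_cancel] at h1 h2 h3 h4
    -- telescoping for the auxiliary adjoint
    have htele := tele_aux u Uc (Φaux (p + 1)) (Rc (p + 1)) p hp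
      (fun k hk => by
        have := haccc (p + 1) hmem2 k (by simpa using hk)
        simpa using this)
    -- decompose
    have hφ : φf (p + 1) p = Φaux (p + 1) p + φc p := by rw [h4]; abel
    rw [h2, hφ, inner_add_left] at h1
    have hv1 : u p - Uc (p + 1) p = (u p - Uc p p) + (Uc p p - Uc (p + 1) p) := by abel
    have hv2 : u p - Uc (p + 1) p = (u p - Uf p p) + (Uf p p - Uc (p + 1) p) := by abel
    rw [show (⟪Φaux (p + 1) p, u p - Uc (p + 1) p⟫ : ℝ)
        = ⟪Φaux (p + 1) p, u p - Uc p p⟫ + ⟪Φaux (p + 1) p, Uc p p - Uc (p + 1) p⟫ by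
          rw [← inner_add_right, ← hv1],
      show (⟪φc p, u p - Uc (p + 1) p⟫ : ℝ)
        = ⟪φc p, u p - Uf p p⟫ + ⟪φc p, Uf p p - Uc (p + 1) p⟫ by
          rw [← inner_add_right, ← hv2],
      htele, ih hpP] at h1
    rw [← h3, h1]
    rw [Finset.sum_Icc_succ_top (by omega : 1 ≤ p + 1),
        Finset.sum_Icc_succ_top (by omega : 2 ≤ p + 1),
        Finset.sum_Icc_succ_top (by omega : 2 ≤ p + 1),
        Finset.sum_Icc_succ_top (by omega : 2 ≤ p + 1)]
    simp only [Nat.add_sub_cancel]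
    rw [h4, ← h2]
    ring

/-- Theorem `par_dd_err`: full error decomposition of the Space-Time Parallel Algorithm.
Under the hypotheses of the Parareal error decomposition, with the additional splitting of
each fine time-subdomain residual `Rf p = ℰ_t^p + ℰ_s^p + ℰ_k^p` into temporal, spatial
discretization and spatial iteration parts, the QoI error is
`(ψ, u(T) - W(T)) = 𝒟_t + 𝒟_s + 𝒟_k + 𝒜 + 𝒞 + 𝒦`. -/
theorem STPA_error_decomposition
    {V : Type*} [NormedAddCommGroup V] [InnerProductSpace ℝ V]
    (P : ℕ) (hP : 1 ≤ P) (T : ℕ → ℝ) (hT : ∀ p < P, T p < T (p + 1))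
    (u : ℕ → V) (Uf Uc : ℕ → ℕ → V) (φf : ℕ → ℕ → V) (φc : ℕ → V)
    (Φaux : ℕ → ℕ → V) (Rf : ℕ → ℝ) (Rc : ℕ → ℕ → ℝ)
    (Et Es Ek : ℕ → ℝ) (ψ : V)
    -- fine-scale accumulation relations (for the STPA solution `Uf`)
    (haccf : ∀ p ∈ Finset.Icc 1 P,
      ⟪φf p p, u p - Uf p p⟫ = ⟪φf p (p - 1), u (p - 1) - Uf p (p - 1)⟫ + Rf p)
    -- fine solutions take initial data from the coarse solutions
    (hinit : ∀ p ∈ Finset.Icc 1 P, Uf p (p - 1) = Uc p (p - 1))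
    -- fine adjoint terminal data from the coarse adjoint
    (hterm : ∀ p ∈ Finset.Icc 1 P, φf p p = φc p)
    -- coarse adjoint terminal data
    (hψ : φc P = ψ)
    -- coarse-scale accumulation relations weighted by the auxiliary adjoints
    (haccc : ∀ p ∈ Finset.Icc 2 P, ∀ k ∈ Finset.Icc 1 (p - 1),
      ⟪Φaux p k, u k - Uc k k⟫ = ⟪Φaux p (k - 1), u (k - 1) - Uc k (k - 1)⟫ + Rc p k)
    -- auxiliary adjoint terminal data
    (hauxterm : ∀ p ∈ Finset.Icc 2 P, Φaux p (p - 1) = φf p (p - 1) - φc (p - 1))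
    -- per-subdomain residual splitting into temporal, spatial discretization and
    -- spatial (domain decomposition) iteration parts
    (hsplit : ∀ p ∈ Finset.Icc 1 P, Rf p = Et p + Es p + Ek p) :
    ⟪ψ, u P - Uf P P⟫ =
      -- 𝒟_t : temporal discretization error
      ((∑ p ∈ Finset.Icc 1 P, Et p) + ⟪φf 1 0, u 0 - Uc 1 0⟫)
      -- 𝒟_s : spatial discretization error
      + (∑ p ∈ Finset.Icc 1 P, Es p)
      -- 𝒟_k : spatial iteration error
      + (∑ p ∈ Finset.Icc 1 P, Ek p)
      -- 𝒜 : auxiliary error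
      + (∑ p ∈ Finset.Icc 2 P,
          ((∑ k ∈ Finset.Icc 2 (p - 1), ⟪Φaux p (k - 1), Uc (k - 1) (k - 1) - Uc k (k - 1)⟫)
            + (∑ k ∈ Finset.Icc 1 (p - 1), Rc p k)
            + ⟪Φaux p 0, u 0 - Uc 1 0⟫))
      -- 𝒞 : coarse-scale jump error
      + (∑ p ∈ Finset.Icc 2 P,
          ⟪φf p (p - 1) - φc (p - 1), Uc (p - 1) (p - 1) - Uc p (p - 1)⟫)
      -- 𝒦 : Parareal iteration error
      + (∑ p ∈ Finset.Icc 2 P, ⟪φc (p - 1), Uf (p - 1) (p - 1) - Uf p (p - 1)⟫) := by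
  rw [← hψ]
  rw [main_aux P u Uf Uc φf φc Φaux Rf Rc haccf hinit hterm haccc hauxterm P hP le_rfl]
  rw [Finset.sum_congr rfl hsplit, Finset.sum_add_distrib, Finset.sum_add_distrib]
  ring
end
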